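/- arXiv:1905.09382 — 2 statements merged into one kernel-verified Lean document; each statement's English description precedes it below -/
import Mathlib

section
/- Let u : ℝ → ℂ be differentiable and nonvanishing on an open interval I, let τ ∈ ℂ and A, B ∈ ℂ with A + B·x ≠ 0 on I. If u is moreover twice differentiable and satisfies u'(x)/u(x) + i·τ/u(x)² = B/(A+Bx) for all x ∈ I, then u(x)³·u''(x) = τ² for all x ∈ I. -/
theorem stmt_1 (I : Set ℝ) (hI : IsOpen I) (u : ℝ → ℂ) (τ A B : ℂ)
    (hu : ContDiffOn ℝ 2 u I)
    (hne : ∀ x ∈ I, u x ≠ 0)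
    (hAB : ∀ x ∈ I, A + B * (x : ℂ) ≠ 0)
    (heq : ∀ x ∈ I,
      deriv u x / u x + Complex.I * τ / (u x)^2 = B / (A + B * (x : ℂ))) :
    ∀ x ∈ I, (u x)^3 * deriv (deriv u) x = τ^2 := by
  intro x hx
  have hdiff : ∀ y ∈ I, DifferentiableAt ℝ u y := fun y hy =>
    (hu.contDiffAt (hI.mem_nhds hy)).differentiableAt (by norm_num)
  -- rearranged first-order equation
  have key : ∀ y ∈ I, deriv u y = B * u y / (A + B * (y : ℂ)) - Complex.I * τ / u y := by
    intro y hy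
    have h := heq y hy
    have h1 := hne y hy
    have h2 := hAB y hy
    have h' : deriv u y / u y = B / (A + B * (y : ℂ)) - Complex.I * τ / (u y)^2 := by
      linear_combination h
    rw [(div_eq_iff h1).mp h']
    field_simp
  set g : ℝ → ℂ := fun y => B * u y / (A + B * (y : ℂ)) - Complex.I * τ / u y with hg
  have hEq : deriv u =ᶠ[nhds x] g := by
    filter_upwards [hI.mem_nhds hx] with y hy using key y hy
  have hcast : HasDerivAt (fun y : ℝ => ((y : ℂ))) 1 x := by
    simpa using (hasDerivAt_id x).ofReal_comp
  have hu' : HasDerivAt u (deriv u x) x := (hdiff x hx).hasDerivAt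
  have hlin : HasDerivAt (fun y : ℝ => A + B * (y : ℂ)) B x := by
    simpa using ((hcast.const_mul B).const_add A)
  have h1 : HasDerivAt (fun y => B * u y / (A + B * (y : ℂ)))
      ((B * deriv u x * (A + B * (x : ℂ)) - B * u x * B) / (A + B * (x : ℂ))^2) x :=
    (hu'.const_mul B).div hlin (hAB x hx)
  have h2 : HasDerivAt (fun y => Complex.I * τ / u y)
      ((0 * u x - Complex.I * τ * deriv u x) / (u x)^2) x :=
    (hasDerivAt_const x (Complex.I * τ)).div hu' (hne x hx)
  have hg' : HasDerivAt g
      ((B * deriv u x * (A + B * (x : ℂ)) - B * u x * B) / (A + B * (x : ℂ))^2 -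
        (0 * u x - Complex.I * τ * deriv u x) / (u x)^2) x := h1.sub h2
  have hdd : deriv (deriv u) x = _ := (hg'.congr_of_eventuallyEq hEq).deriv
  rw [hdd, key x hx]
  have h3 := hne x hx
  have h4 := hAB x hx
  field_simp
  ring_nf
  simp [Complex.I_sq]
end

section
/- With ρ₀(t) = β₁(t) + i·β₂(t) where β₁(t) = (σ/t)·log(t/T)/D_σ(t), β₂(t) = (κ/t)/D_σ(t), and D_σ(t) = κ²/σ + σ·log²(t/T), the complex-valued function ρ₀ satisfies the Riccati-type equation ρ₀'(t) + ρ₀(t)/t + ρ₀(t)² = 0 for all t > 0. -/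
/-!
Since `D(t) σ = (σ log(t/T) + iκ)(σ log(t/T) - iκ)`, the function is
`ρ₀(t) = σ / (t (σ log(t/T) - iκ)) = u'(t) / u(t)` with `u(t) = σ log t + b` for a constant `b`.
The Riccati substitution `ρ = u'/u` turns `ρ' + ρ/t + ρ² = 0` into `u'' + u'/t = 0`,
i.e. `(t u')' = 0`, which `u = σ log t + b` satisfies.
-/

open Complex

lemma hasDerivAt_div_mul_log_add {a b : ℂ} {t : ℝ} (ht : 0 < t)
    (hu : a * Real.log t + b ≠ 0) :
    HasDerivAt (fun s : ℝ => a / (s * (a * Real.log s + b)))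
      (-(a * (a * Real.log t + b + a)) / (t * (a * Real.log t + b)) ^ 2) t := by
  have hlog : HasDerivAt (fun s : ℝ => ((Real.log s : ℝ) : ℂ)) ((t⁻¹ : ℝ) : ℂ) t :=
    (Real.hasDerivAt_log ht.ne').ofReal_comp
  have hden : HasDerivAt (fun s : ℝ => (s : ℂ) * (a * Real.log s + b))
      (a * Real.log t + b + a) t := by
    refine ((hasDerivAt_id' t).ofReal_comp.mul ((hlog.const_mul a).add_const b)).congr_deriv ?_
    have htC : (t : ℂ) ≠ 0 := ofReal_ne_zero.mpr ht.ne'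
    push_cast
    field_simp
  have hden_ne : (t : ℂ) * (a * Real.log t + b) ≠ 0 := mul_ne_zero (ofReal_ne_zero.mpr ht.ne') hu
  refine ((hasDerivAt_const t a).div hden hden_ne).congr_deriv ?_
  ring

lemma riccati_div_mul_log_add {a b : ℂ} {t : ℝ} (ht : 0 < t)
    (hu : a * Real.log t + b ≠ 0) :
    let ρ := fun s : ℝ => a / (s * (a * Real.log s + b))
    deriv ρ t + ρ t / t + ρ t ^ 2 = 0 := by
  intro ρ
  have htC : (t : ℂ) ≠ 0 := ofReal_ne_zero.mpr ht.ne'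
  rw [(hasDerivAt_div_mul_log_add ht hu).deriv]
  simp only [ρ]
  field_simp
  ring

lemma ofReal_mul_sub_I_mul_ne_zero (x : ℝ) {y : ℝ} (hy : y ≠ 0) :
    (x : ℂ) - I * y ≠ 0 := by
  intro h
  simpa [hy] using congrArg Complex.im h

lemma add_I_mul_div_eq_div_sub_I_mul {σ κ s : ℝ} (hσ : 0 < σ) (hκ : κ ≠ 0) (hs : s ≠ 0) (L : ℝ) :
    (((σ * L : ℝ) : ℂ) + I * κ) / ((s : ℂ) * ((κ ^ 2 / σ + σ * L ^ 2 : ℝ) : ℂ))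
      = σ / (s * (((σ * L : ℝ) : ℂ) - I * κ)) := by
  have hsC : (s : ℂ) ≠ 0 := ofReal_ne_zero.mpr hs
  have hσC : (σ : ℂ) ≠ 0 := ofReal_ne_zero.mpr hσ.ne'
  have hD : ((κ ^ 2 / σ + σ * L ^ 2 : ℝ) : ℂ) ≠ 0 := ofReal_ne_zero.mpr (by positivity)
  rw [div_eq_div_iff (mul_ne_zero hsC hD) (mul_ne_zero hsC (ofReal_mul_sub_I_mul_ne_zero _ hκ))]
  push_cast
  field_simp
  ring_nf
  rw [I_sq]
  ring

theorem stmt_11 (κ σ T : ℝ) (hσ : 0 < σ) (hκ : κ ≠ 0) (hT : 0 < T)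
    (D : ℝ → ℝ) (hD : ∀ t, D t = κ^2 / σ + σ * (Real.log (t / T))^2)
    (ρ₀ : ℝ → ℂ)
    (hρ : ∀ t, ρ₀ t = (((σ * Real.log (t / T) : ℝ) : ℂ) + Complex.I * (κ : ℂ))
      / (((t : ℝ) : ℂ) * ((D t : ℝ) : ℂ))) :
    ∀ t > 0, deriv ρ₀ t + ρ₀ t / (t : ℂ) + (ρ₀ t)^2 = 0 := by
  intro t ht
  set b : ℂ := -(σ * Real.log T) - I * κ
  have hlog {s : ℝ} (hs : s ≠ 0) :
      (σ : ℂ) * Real.log s + b = ↑(σ * Real.log (s / T)) - I * κ := by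
    rw [Real.log_div hs hT.ne']
    push_cast
    ring
  have hρ_eq {s : ℝ} (hs : s ≠ 0) : ρ₀ s = σ / (s * (σ * Real.log s + b)) := by
    rw [hρ, hD, add_I_mul_div_eq_div_sub_I_mul hσ hκ hs, hlog hs]
  have hρ_nhds : ρ₀ =ᶠ[nhds t] fun s : ℝ => σ / (s * (σ * Real.log s + b)) :=
    (eventually_ne_nhds ht.ne').mono fun s hs => hρ_eq hs
  have hu : (σ : ℂ) * Real.log t + b ≠ 0 := by
    rw [hlog ht.ne']
    exact ofReal_mul_sub_I_mul_ne_zero _ hκ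
  rw [hρ_nhds.deriv_eq, hρ_eq ht.ne']
  exact riccati_div_mul_log_add ht hu
end
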